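/- The weight w(λ, 0) diverges as λ → +∞; that is, the function λ ↦ w(λ, 0) tends to +∞ as λ → +∞. (Physically: in the hardcore limit, if one impurity momentum borders the Fermi sea and the other lies at its core, the sea density between the impurities diverges.) -/

import Mathlib

open Complex Filter

/-- `u(λ₁, λ₂)` from the hardcore-limit three-point correlator. -/
noncomputable def ufun (l1 l2 : ℝ) : ℂ :=
  ((((1 + l1 ^ 2) * (1 + l2 ^ 2)) / ((l1 - l2) ^ 2 + 4) : ℝ) : ℂ) *
    ((Complex.I * ((l1 : ℂ) - (l2 : ℂ)) + 2) /
      ((1 + Complex.I * (l1 : ℂ)) * (1 - Complex.I * (l2 : ℂ)))) ^ 2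

/-- `v(λ₁, λ₂)`: the value of the weight factor when the majority-fermion coordinate lies
strictly between the two impurity positions. -/
noncomputable def vwfun (l1 l2 : ℝ) : ℂ :=
  ((Complex.I * (l1 : ℂ) - 1) * (Complex.I * (l2 : ℂ) + 1)) /
    ((Complex.I * (l1 : ℂ) + 1) * (Complex.I * (l2 : ℂ) - 1))

/-- The weight `w(λ₁, λ₂) = (1 − Re (u·v))/(1 − Re u)`. -/
noncomputable def wfun (l1 l2 : ℝ) : ℝ :=
  (1 - (ufun l1 l2 * vwfun l1 l2).re) / (1 - (ufun l1 l2).re)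

lemma hne (l : ℝ) : (1 + Complex.I * (l : ℂ)) ≠ 0 := by
  intro h
  have := congrArg Complex.re h
  simp at this

lemma hone (l : ℝ) : ((1 : ℂ) + (l:ℂ)^2) ≠ 0 := by
  have : (((1 + l^2 : ℝ)):ℂ) ≠ 0 := Complex.ofReal_ne_zero.mpr (by positivity)
  push_cast at this
  convert this using 2

lemma frac_eq (l : ℝ) :
    (Complex.I * (l:ℂ) + 2) / (1 + Complex.I * (l:ℂ))
      = ((((l^2+2 : ℝ)):ℂ) - Complex.I * (l:ℂ)) / (((1 + l^2 : ℝ)):ℂ) := by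
  have h1 := hne l
  have h2 : (((1 + l^2 : ℝ)):ℂ) ≠ 0 := Complex.ofReal_ne_zero.mpr (by positivity)
  rw [div_eq_div_iff h1 h2]
  push_cast
  linear_combination ((l:ℂ)^2) * Complex.I_sq

lemma u_eq (l : ℝ) :
    ufun l 0 = (((1 + l^2) / (l^2 + 4) / (1+l^2)^2 : ℝ):ℂ) *
      ((((l^2+2 : ℝ)):ℂ) - Complex.I * (l:ℂ))^2 := by
  unfold ufun
  simp only [Complex.ofReal_zero, mul_zero, sub_zero, mul_one, sub_zero, one_pow]
  norm_num
  rw [frac_eq, div_pow]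
  have h2 : (((1 + l^2 : ℝ)):ℂ) ≠ 0 := Complex.ofReal_ne_zero.mpr (by positivity)
  push_cast
  push_cast at h2
  field_simp

lemma v_eq (l : ℝ) :
    vwfun l 0 = ((((1 - l^2 : ℝ)):ℂ) - Complex.I * ((2*l : ℝ):ℂ)) / (((1 + l^2 : ℝ)):ℂ) := by
  unfold vwfun
  simp only [Complex.ofReal_zero, mul_zero, zero_add, zero_sub, mul_one]
  have h1 : (Complex.I * (l:ℂ) + 1) ≠ 0 := by
    intro h; have := congrArg Complex.re h; simp at this
  have h1' : -(Complex.I * (l:ℂ) + 1) ≠ 0 := neg_ne_zero.mpr h1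
  have h2 : (((1 + l^2 : ℝ)):ℂ) ≠ 0 := Complex.ofReal_ne_zero.mpr (by positivity)
  rw [mul_neg_one, div_eq_div_iff h1' h2]
  push_cast
  linear_combination (-2*(l:ℂ)^2) * Complex.I_sq

lemma uv_eq (l : ℝ) :
    ufun l 0 * vwfun l 0 = (((1:ℝ) / ((l^2+4)*(1+l^2)^2) : ℝ):ℂ) *
      ((2:ℂ) - Complex.I * ((l*(l^2+3) : ℝ):ℂ))^2 := by
  rw [u_eq, v_eq]
  have h2 : (((l:ℝ)^2+4 : ℝ)) ≠ 0 := by positivity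
  have h3 : (((1:ℝ)+l^2 : ℝ)) ≠ 0 := by positivity
  have h2' : (((l:ℝ)^2+4 : ℝ) : ℂ) ≠ 0 := Complex.ofReal_ne_zero.mpr h2
  have h3' : (((1:ℝ)+l^2 : ℝ) : ℂ) ≠ 0 := Complex.ofReal_ne_zero.mpr h3
  push_cast
  push_cast at h2' h3'
  field_simp
  linear_combination (-(2*(l:ℂ)^3*Complex.I + 3*(l:ℂ)^4 + (l:ℂ)^6)) * Complex.I_sq

lemma u_re (l : ℝ) : (ufun l 0).re
    = (1 + l^2) / (l^2 + 4) / (1+l^2)^2 * ((l^2+2)^2 - l^2) := by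
  rw [u_eq]
  simp only [pow_two, Complex.mul_re, Complex.mul_im, Complex.sub_re, Complex.sub_im,
    Complex.ofReal_re, Complex.ofReal_im, Complex.I_re, Complex.I_im]
  ring

lemma uv_re (l : ℝ) : (ufun l 0 * vwfun l 0).re
    = 1 / ((l^2+4)*(1+l^2)^2) * (4 - (l*(l^2+3))^2) := by
  rw [uv_eq]
  simp only [pow_two, Complex.mul_re, Complex.mul_im, Complex.sub_re, Complex.sub_im,
    Complex.ofReal_re, Complex.ofReal_im, Complex.I_re, Complex.I_im, Complex.re_ofNat,
    Complex.im_ofNat]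
  ring


/-- The weight `w(λ, 0)` diverges as `λ → +∞`. -/
theorem weight_diverges_at_fermi_edge :
    Filter.Tendsto (fun lam : ℝ => wfun lam 0) Filter.atTop Filter.atTop := by
  have hg : Filter.Tendsto (fun l : ℝ => (l^2+3)^2/(1+l^2)) Filter.atTop Filter.atTop := by
    have hp : Tendsto (fun l : ℝ => l^2) atTop atTop := by
      simpa [pow_two] using Filter.Tendsto.atTop_mul_atTop₀
        (tendsto_id (α := ℝ)) (tendsto_id (α := ℝ))
    apply tendsto_atTop_mono (fun l => ?_) (tendsto_atTop_add_const_left _ 1 hp)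
    rw [le_div_iff₀ (by positivity)]
    nlinarith [sq_nonneg l]
  refine hg.congr' ?_
  filter_upwards [eventually_gt_atTop (0:ℝ)] with l hl
  have hl2 : l ≠ 0 := ne_of_gt hl
  have h1 : ((l:ℝ)^2+4) ≠ 0 := by positivity
  have h2 : ((1:ℝ)+l^2) ≠ 0 := by positivity
  have hB : 1 - (ufun l 0).re = 2*l^2/((l^2+4)*(1+l^2)) := by
    rw [u_re]; field_simp; ring
  have hA : 1 - (ufun l 0 * vwfun l 0).re = 2*l^2*(l^2+3)^2/((l^2+4)*(1+l^2)^2) := by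
    rw [uv_re]; field_simp; ring
  rw [wfun, hA, hB]
  field_simp
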